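/- Let X, Y, A, B be nonempty finite types, let p be a strictly positive probability mass function on X × Y, and let e : X → A and f : Y → B. Let r(a|b) be the conditional pmf of a = e(x) given b = f(y) under the pushforward of p, and define the model q(y|x) = p_Y(y)·r(e(x)|f(y)) / Σ_{y'} p_Y(y')·r(e(x)|f(y')). Then the expected log-likelihood satisfies Σ_{x,y} p(x,y) · log q(y|x) = −H(Y) + I(e(X); f(Y)). -/

import Mathlib

/-!
Statement 1: For a strictly positive pmf `p` on `X × Y`, maps `e : X → A` and
`f : Y → B`, with `r(a|b)` the conditional pmf of `a = e x` given `b = f y`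
under the pushforward of `p`, the model
`q(y|x) = p_Y(y)·r(e x | f y) / ∑_{y'} p_Y(y')·r(e x | f y')` satisfies
`∑_{x,y} p(x,y) · log q(y|x) = −H(Y) + I(e(X); f(Y))`.
-/

open Finset
open scoped Classical

noncomputable section

variable {X Y A B : Type*} [Fintype X] [Fintype Y] [Fintype A] [Fintype B]

/-- Marginal of the second coordinate. -/
def margY (p : X × Y → ℝ) (y : Y) : ℝ := ∑ x, p (x, y)

/-- Entropy of the second coordinate. -/
def entY (p : X × Y → ℝ) : ℝ := -∑ y, margY p y * Real.log (margY p y)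

/-- Mutual information between the two coordinates of a pmf on a product of
finite types (terms with zero mass contribute `0`, since `Real.log 0 = 0`). -/
def mutualInfo (p : X × Y → ℝ) : ℝ :=
  ∑ x, ∑ y, p (x, y) * Real.log (p (x, y) / ((∑ y', p (x, y')) * (∑ x', p (x', y))))

/-- Pushforward pmf of `p` under `(x, y) ↦ (e x, f y)`. -/
def pushPmf (p : X × Y → ℝ) (e : X → A) (f : Y → B) : A × B → ℝ :=
  fun ab => ∑ x, ∑ y, if e x = ab.1 ∧ f y = ab.2 then p (x, y) else 0

/-- Conditional pmf of `a = e x` given `b = f y` under the pushforward of `p`. -/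
def condPush (p : X × Y → ℝ) (e : X → A) (f : Y → B) (a : A) (b : B) : ℝ :=
  pushPmf p e f (a, b) / ∑ a', pushPmf p e f (a', b)

/-- The model `q(y|x) ∝ p_Y(y)·r(e x | f y)`. -/
def qOpt (p : X × Y → ℝ) (e : X → A) (f : Y → B) (y : Y) (x : X) : ℝ :=
  margY p y * condPush p e f (e x) (f y) /
    ∑ y', margY p y' * condPush p e f (e x) (f y')

/-!
Write `π` for the pushforward of `p`. Summing over the fibres of `f`, the normaliser
`∑ y', p_Y(y') r(a | f y')` of the model collapses to the marginal `π_A(a)`, so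
`q(y|x) = p_Y(y) · π(e x, f y) / (π_A(e x) π_B(f y))`. Hence `log q(y|x)` is `log p_Y(y)` plus the
pointwise mutual information of `π` at `(e x, f y)`; averaging the first term under `p` gives
`-H(Y)`, and averaging the second under `p` is averaging it under `π`, which is `I(e(X); f(Y))`.
-/

/-- The exponential of the pointwise mutual information of a pmf on `A × B`. -/
def pmiRatio (π : A × B → ℝ) (a : A) (b : B) : ℝ :=
  π (a, b) / ((∑ b', π (a, b')) * ∑ a', π (a', b))

theorem pushPmf_nonneg {α β : Type*} {p : X × Y → ℝ} (hp : ∀ xy, 0 ≤ p xy) (e : X → α)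
    (f : Y → β) (ab : α × β) : 0 ≤ pushPmf p e f ab :=
  sum_nonneg fun _ _ => sum_nonneg fun _ _ => by split <;> simp [hp]

section Pushforward

variable {p : X × Y → ℝ} (e : X → A) (f : Y → B)

theorem sum_pushPmf_mul (g : A → B → ℝ) :
    ∑ a, ∑ b, pushPmf p e f (a, b) * g a b = ∑ x, ∑ y, p (x, y) * g (e x) (f y) := by
  simp only [pushPmf, sum_mul, ite_mul, zero_mul]
  rw [sum_comm]
  simp_rw [sum_comm (γ := A), sum_comm (γ := B)]
  simp [ite_and]

theorem sum_mul_log_pmiRatio_pushPmf :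
    ∑ x, ∑ y, p (x, y) * Real.log (pmiRatio (pushPmf p e f) (e x) (f y))
      = mutualInfo (pushPmf p e f) :=
  (sum_pushPmf_mul e f fun a b => Real.log (pmiRatio (pushPmf p e f) a b)).symm

theorem sum_margY_mul_condPush (hp : ∀ xy, 0 ≤ p xy) (a : A) :
    ∑ y, margY p y * condPush p e f a (f y) = ∑ b, pushPmf p e f (a, b) := by
  simp only [margY, sum_mul]
  rw [sum_comm, ← sum_pushPmf_mul e f fun _ b => condPush p e f a b, sum_comm]
  refine sum_congr rfl fun b _ => ?_
  rw [← sum_mul, condPush, mul_div_assoc']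
  refine mul_div_cancel_left_of_imp fun hzero => ?_
  exact (sum_eq_zero_iff_of_nonneg fun a' _ => pushPmf_nonneg hp e f (a', b)).1 hzero a
    (mem_univ a)

theorem qOpt_eq_margY_mul_pmiRatio (hp : ∀ xy, 0 ≤ p xy) (x : X) (y : Y) :
    qOpt p e f y x = margY p y * pmiRatio (pushPmf p e f) (e x) (f y) := by
  rw [qOpt, sum_margY_mul_condPush e f hp, condPush, pmiRatio]
  ring

theorem pmiRatio_pushPmf_pos (hp : ∀ xy, 0 ≤ p xy) {x : X} {y : Y} (hxy : 0 < p (x, y)) :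
    0 < pmiRatio (pushPmf p e f) (e x) (f y) := by
  have hterm : ∀ x' y', 0 ≤ if e x' = e x ∧ f y' = f y then p (x', y') else 0 :=
    fun x' y' => by split <;> simp [hp]
  have hjoint : 0 < pushPmf p e f (e x, f y) :=
    sum_pos' (fun x' _ => sum_nonneg fun y' _ => hterm x' y')
      ⟨x, mem_univ x, sum_pos' (fun y' _ => hterm x y')
        ⟨y, mem_univ y, by simpa using hxy⟩⟩
  have hleft : 0 < ∑ b, pushPmf p e f (e x, b) := hjoint.trans_le <|
    single_le_sum (fun b _ => pushPmf_nonneg hp e f (e x, b)) (mem_univ (f y))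
  have hright : 0 < ∑ a, pushPmf p e f (a, f y) := hjoint.trans_le <|
    single_le_sum (fun a _ => pushPmf_nonneg hp e f (a, f y)) (mem_univ (e x))
  exact div_pos hjoint (mul_pos hleft hright)

end Pushforward

theorem sum_mul_log_margY (p : X × Y → ℝ) :
    ∑ x, ∑ y, p (x, y) * Real.log (margY p y) = -entY p := by
  rw [entY, neg_neg, sum_comm]
  simp only [margY, sum_mul]

theorem expected_loglik_eq_neg_entropy_add_mutual_info_general
    (p : X × Y → ℝ) (hpos : ∀ xy, 0 < p xy)
    (e : X → A) (f : Y → B) :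
    ∑ x, ∑ y, p (x, y) * Real.log (qOpt p e f y x)
      = -entY p + mutualInfo (pushPmf p e f) := by
  have hp : ∀ xy, 0 ≤ p xy := fun xy => (hpos xy).le
  have hsplit : ∀ x y, p (x, y) * Real.log (qOpt p e f y x)
      = p (x, y) * Real.log (margY p y)
        + p (x, y) * Real.log (pmiRatio (pushPmf p e f) (e x) (f y)) := fun x y => by
    have hmarg : 0 < margY p y :=
      sum_pos (fun x' _ => hpos (x', y)) ⟨x, mem_univ x⟩
    rw [qOpt_eq_margY_mul_pmiRatio e f hp, Real.log_mul hmarg.ne'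
      (pmiRatio_pushPmf_pos e f hp (hpos (x, y))).ne', mul_add]
  simp only [hsplit, sum_add_distrib]
  rw [sum_mul_log_margY, sum_mul_log_pmiRatio_pushPmf]

theorem expected_loglik_eq_neg_entropy_add_mutual_info
    [Nonempty X] [Nonempty Y] [Nonempty A] [Nonempty B]
    (p : X × Y → ℝ) (hpos : ∀ xy, 0 < p xy) (hsum : ∑ xy, p xy = 1)
    (e : X → A) (f : Y → B) :
    ∑ x, ∑ y, p (x, y) * Real.log (qOpt p e f y x)
      = -entY p + mutualInfo (pushPmf p e f) :=
  expected_loglik_eq_neg_entropy_add_mutual_info_general p hpos e f
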